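/- The one-point suspension Susp₁(v,K) is a simplicial cone if and only if K is a simplicial cone. Specifically: if K = a∗B then Susp₁(v,K) is a cone (with apex v' or a), and conversely if Susp₁(v,K) = a∗B then K is a cone. -/

import Mathlib

open Finset

variable {V : Type} [DecidableEq V]

/-- `K` (a finite set of finite sets) is an abstract simplicial complex:
it contains the empty face and is closed under taking subsets. -/
def IsComplex (K : Finset (Finset V)) : Prop :=
  ∅ ∈ K ∧ ∀ s ∈ K, ∀ t ⊆ s, t ∈ K

/-- The facets (maximal faces) of `K`. -/
def facetsOf (K : Finset (Finset V)) : Finset (Finset V) :=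
  K.filter fun s => ∀ t ∈ K, s ⊆ t → s = t

/-- The vertex set of `K`. -/
def vertsOf (K : Finset (Finset V)) : Finset V := K.sup id

/-- The link of the vertex `v` in `K`. -/
def linkOf (K : Finset (Finset V)) (v : V) : Finset (Finset V) :=
  (K.filter fun s => v ∈ s).image fun s => s.erase v

/-- The deletion of the vertex `v` from `K`. -/
def delOf (K : Finset (Finset V)) (v : V) : Finset (Finset V) :=
  K.filter fun s => v ∉ s

/-- The star of the vertex `v` in `K`. -/
def starOf (K : Finset (Finset V)) (v : V) : Finset (Finset V) :=
  K.filter fun s => v ∈ s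

/-- Join of two face sets. -/
def joinF (K L : Finset (Finset V)) : Finset (Finset V) :=
  (K ×ˢ L).image fun p => p.1 ∪ p.2

/-- Image of a complex under a vertex map. -/
def mapC {W : Type} [DecidableEq W] (f : V → W) (K : Finset (Finset V)) :
    Finset (Finset W) :=
  K.image (Finset.image f)

/-- The full edge `{v', v''}` on the two new vertices `v' = Sum.inr false`,
`v'' = Sum.inr true`, as a simplicial complex. -/
def edgeC (V : Type) [DecidableEq V] : Finset (Finset (V ⊕ Bool)) :=
  ({Sum.inr false, Sum.inr true} : Finset (V ⊕ Bool)).powerset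

/-- The boundary of the edge `{v', v''}`. -/
def bedgeC (V : Type) [DecidableEq V] : Finset (Finset (V ⊕ Bool)) :=
  (edgeC V).erase {Sum.inr false, Sum.inr true}

/-- The one-point suspension of `K` at the vertex `v`:
`((∂e ∗ K) ∖ (∂e ∗ star_K(v))) ∪ (e ∗ link_K(v))` where `e = {v',v''}`. -/
def susp (v : V) (K : Finset (Finset V)) : Finset (Finset (V ⊕ Bool)) :=
  (joinF (bedgeC V) (mapC Sum.inl K) \ joinF (bedgeC V) (mapC Sum.inl (starOf K v))) ∪
    joinF (edgeC V) (mapC Sum.inl (linkOf K v))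

/-- `L` is a cone with apex `a`: `a` is a vertex of `L` contained in every facet,
i.e. `L = a ∗ link_L(a)`. -/
def IsConeWithApex {W : Type} [DecidableEq W] (L : Finset (Finset W)) (a : W) : Prop :=
  {a} ∈ L ∧ ∀ F ∈ facetsOf L, a ∈ F

-- auxiliary

def eOf (F : Finset (V ⊕ Bool)) : Finset (V ⊕ Bool) := F.filter (fun x => x.isRight)
noncomputable def sOf (F : Finset (V ⊕ Bool)) : Finset V :=
  F.preimage Sum.inl Sum.inl_injective.injOn

@[simp] lemma mem_eOf {F : Finset (V ⊕ Bool)} {x} : x ∈ eOf F ↔ x ∈ F ∧ x.isRight := by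
  simp [eOf]

@[simp] lemma mem_sOf {F : Finset (V ⊕ Bool)} {a} : a ∈ sOf F ↔ Sum.inl a ∈ F := by
  simp [sOf]

lemma decomp (F : Finset (V ⊕ Bool)) : eOf F ∪ (sOf F).image Sum.inl = F := by
  ext x; cases x <;> simp

lemma eOf_union (A B : Finset (V ⊕ Bool)) : eOf (A ∪ B) = eOf A ∪ eOf B :=
  filter_union _ _ _

lemma sOf_union (A B : Finset (V ⊕ Bool)) : sOf (A ∪ B) = sOf A ∪ sOf B := by
  ext a; simp

@[simp] lemma eOf_image_inl (s : Finset V) : eOf (s.image Sum.inl) = ∅ := by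
  ext x; cases x <;> simp

@[simp] lemma sOf_image_inl (s : Finset V) : sOf (s.image Sum.inl) = s := by
  ext a; simp

lemma eOf_of_subset {e : Finset (V ⊕ Bool)}
    (he : e ⊆ {Sum.inr false, Sum.inr true}) : eOf e = e := by
  ext x
  simp only [mem_eOf, and_iff_left_iff_imp]
  intro hx
  rcases mem_insert.1 (he hx) with h | h <;> simp_all

lemma sOf_of_subset {e : Finset (V ⊕ Bool)}
    (he : e ⊆ {Sum.inr false, Sum.inr true}) : sOf e = ∅ := by
  ext a
  simp only [mem_sOf, notMem_empty, iff_false]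
  intro hx
  rcases mem_insert.1 (he hx) with h | h <;> simp_all

lemma eOf_insert_inl (a : V) (F : Finset (V ⊕ Bool)) :
    eOf (insert (Sum.inl a) F) = eOf F := by ext x; cases x <;> simp

lemma sOf_insert_inl (a : V) (F : Finset (V ⊕ Bool)) :
    sOf (insert (Sum.inl a) F) = insert a (sOf F) := by ext b; simp

lemma eOf_insert_inr (b : Bool) (F : Finset (V ⊕ Bool)) :
    eOf (insert (Sum.inr b) F) = insert (Sum.inr b) (eOf F) := by
  ext x; cases x <;> simp

lemma sOf_insert_inr (b : Bool) (F : Finset (V ⊕ Bool)) :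
    sOf (insert (Sum.inr b) F) = sOf F := by ext a; simp

@[simp] lemma eOf_empty : eOf (∅ : Finset (V ⊕ Bool)) = ∅ := by ext x; simp
@[simp] lemma sOf_empty : sOf (∅ : Finset (V ⊕ Bool)) = ∅ := by ext a; simp

lemma mem_joinF {P Q : Finset (Finset V)} {F : Finset V} :
    F ∈ joinF P Q ↔ ∃ p ∈ P, ∃ q ∈ Q, F = p ∪ q := by
  simp only [joinF, mem_image, mem_product, Prod.exists]
  constructor
  · rintro ⟨p, q, ⟨hp, hq⟩, rfl⟩; exact ⟨p, hp, q, hq, rfl⟩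
  · rintro ⟨p, hp, q, hq, rfl⟩; exact ⟨p, q, ⟨hp, hq⟩, rfl⟩

lemma mem_mapC {K : Finset (Finset V)} {t : Finset (V ⊕ Bool)} :
    t ∈ mapC Sum.inl K ↔ ∃ s ∈ K, t = s.image Sum.inl := by
  simp only [mapC, mem_image]
  constructor
  · rintro ⟨s, hs, rfl⟩; exact ⟨s, hs, rfl⟩
  · rintro ⟨s, hs, rfl⟩; exact ⟨s, hs, rfl⟩

lemma mem_bedgeC {e : Finset (V ⊕ Bool)} :
    e ∈ bedgeC V ↔ e ⊆ {Sum.inr false, Sum.inr true} ∧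
      e ≠ {Sum.inr false, Sum.inr true} := by
  simp only [bedgeC, edgeC, mem_erase, mem_powerset]
  tauto

lemma mem_join_bedge {M : Finset (Finset V)} {F : Finset (V ⊕ Bool)} :
    F ∈ joinF (bedgeC V) (mapC Sum.inl M) ↔ eOf F ∈ bedgeC V ∧ sOf F ∈ M := by
  constructor
  · rw [mem_joinF]
    rintro ⟨p, hp, q, hq, rfl⟩
    obtain ⟨s, hs, rfl⟩ := mem_mapC.1 hq
    have hsub := (mem_bedgeC.1 hp).1
    rw [eOf_union, sOf_union, eOf_of_subset hsub, sOf_of_subset hsub,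
      eOf_image_inl, sOf_image_inl]
    simpa using ⟨hp, hs⟩
  · rintro ⟨h1, h2⟩
    rw [mem_joinF]
    exact ⟨eOf F, h1, (sOf F).image Sum.inl, mem_mapC.2 ⟨sOf F, h2, rfl⟩,
      (decomp F).symm⟩

lemma mem_join_edge {M : Finset (Finset V)} {F : Finset (V ⊕ Bool)} :
    F ∈ joinF (edgeC V) (mapC Sum.inl M) ↔
      eOf F ⊆ {Sum.inr false, Sum.inr true} ∧ sOf F ∈ M := by
  constructor
  · rw [mem_joinF]
    rintro ⟨p, hp, q, hq, rfl⟩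
    obtain ⟨s, hs, rfl⟩ := mem_mapC.1 hq
    have hsub : p ⊆ {Sum.inr false, Sum.inr true} := by
      simpa [edgeC] using hp
    rw [eOf_union, sOf_union, eOf_of_subset hsub, sOf_of_subset hsub,
      eOf_image_inl, sOf_image_inl]
    simpa using ⟨hsub, hs⟩
  · rintro ⟨h1, h2⟩
    rw [mem_joinF]
    refine ⟨eOf F, by simpa [edgeC] using h1, (sOf F).image Sum.inl,
      mem_mapC.2 ⟨sOf F, h2, rfl⟩, (decomp F).symm⟩

lemma mem_linkOf {K : Finset (Finset V)} (hK : IsComplex K) {v : V} {s : Finset V} :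
    s ∈ linkOf K v ↔ v ∉ s ∧ insert v s ∈ K := by
  simp only [linkOf, mem_image, mem_filter]
  constructor
  · rintro ⟨t, ⟨ht, hvt⟩, rfl⟩
    exact ⟨notMem_erase _ _, by rwa [insert_erase hvt]⟩
  · rintro ⟨hvs, hins⟩
    exact ⟨insert v s, ⟨hins, mem_insert_self _ _⟩, by rw [erase_insert hvs]⟩

lemma mem_susp {K : Finset (Finset V)} (hK : IsComplex K) {v : V}
    {F : Finset (V ⊕ Bool)} :
    F ∈ susp v K ↔ v ∉ sOf F ∧ eOf F ⊆ {Sum.inr false, Sum.inr true} ∧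
      ((eOf F ≠ {Sum.inr false, Sum.inr true} ∧ sOf F ∈ K) ∨
        insert v (sOf F) ∈ K) := by
  rw [susp, mem_union, mem_sdiff, mem_join_bedge, mem_join_bedge, mem_join_edge,
    mem_linkOf hK]
  constructor
  · rintro (⟨⟨he, hs⟩, hnot⟩ | ⟨he, hvs, hins⟩)
    · have hvs : v ∉ sOf F := by
        intro hvsF
        exact hnot ⟨he, by simp [starOf, hs, hvsF]⟩
      exact ⟨hvs, (mem_bedgeC.1 he).1, Or.inl ⟨(mem_bedgeC.1 he).2, hs⟩⟩
    · exact ⟨hvs, he, Or.inr hins⟩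
  · rintro ⟨hvs, hsub, (⟨hne, hs⟩ | hins)⟩
    · exact Or.inl ⟨⟨mem_bedgeC.2 ⟨hsub, hne⟩, hs⟩,
        fun ⟨_, hst⟩ => hvs (mem_filter.1 hst).2⟩
    · exact Or.inr ⟨hsub, hvs, hins⟩

lemma susp_dc {K : Finset (Finset V)} (hK : IsComplex K) {v : V}
    {F F' : Finset (V ⊕ Bool)} (hF : F ∈ susp v K) (hsub : F' ⊆ F) :
    F' ∈ susp v K := by
  rw [mem_susp hK] at hF ⊢
  obtain ⟨hvs, he, hd⟩ := hF
  have hes : eOf F' ⊆ eOf F := filter_subset_filter _ hsub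
  have hss : sOf F' ⊆ sOf F := fun a ha => mem_sOf.2 (hsub (mem_sOf.1 ha))
  refine ⟨fun h => hvs (hss h), hes.trans he, ?_⟩
  rcases hd with ⟨hne, hs⟩ | hins
  · left
    refine ⟨fun h => hne (subset_antisymm he (h ▸ hes)), hK.2 _ hs _ hss⟩
  · right
    exact hK.2 _ hins _ (insert_subset_insert _ hss)

lemma exists_facet {W : Type} [DecidableEq W] (L : Finset (Finset W)) {s : Finset W}
    (hs : s ∈ L) : ∃ F ∈ facetsOf L, s ⊆ F := by
  obtain ⟨t, ht, hmax⟩ := (L.filter (s ⊆ ·)).exists_max_image Finset.card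
    ⟨s, mem_filter.2 ⟨hs, subset_rfl⟩⟩
  obtain ⟨htL, hst⟩ := mem_filter.1 ht
  refine ⟨t, mem_filter.2 ⟨htL, fun u hu htu => ?_⟩, hst⟩
  exact Finset.eq_of_subset_of_card_le htu
    (hmax u (mem_filter.2 ⟨hu, hst.trans htu⟩))

lemma cone_insert {W : Type} [DecidableEq W] {L : Finset (Finset W)} {a : W}
    (hL : ∀ s ∈ L, ∀ t ⊆ s, t ∈ L) (hc : IsConeWithApex L a) {s : Finset W}
    (hs : s ∈ L) : insert a s ∈ L := by
  obtain ⟨F, hF, hsF⟩ := exists_facet L hs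
  exact hL F (mem_filter.1 hF).1 _ (insert_subset (hc.2 F hF) hsF)

lemma full_ne_single_false :
    ({Sum.inr false} : Finset (V ⊕ Bool)) ≠ {Sum.inr false, Sum.inr true} := by
  intro h
  have : (Sum.inr true : V ⊕ Bool) ∈ ({Sum.inr false} : Finset (V ⊕ Bool)) := by
    rw [h]; simp
  simp at this


/-- The one-point suspension `Susp₁(v,K)` is a simplicial cone iff
`K` is a simplicial cone.  Specifically: if `K` is a cone with apex `a`, then
`Susp₁(v,K)` is a cone (with apex `v'` if `a = v`, and with apex `a` otherwise), and
conversely if `Susp₁(v,K)` is a cone then `K` is a cone. -/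
theorem susp_cone (K : Finset (Finset V)) (v : V)
    (hK : IsComplex K) (hv : {v} ∈ K) :
    (∀ a : V, IsConeWithApex K a →
        (a = v → IsConeWithApex (susp v K) (Sum.inr false)) ∧
        (a ≠ v → IsConeWithApex (susp v K) (Sum.inl a))) ∧
      ((∃ b, IsConeWithApex (susp v K) b) → ∃ a, IsConeWithApex K a) := by
  have hvK : v ∈ ({v} : Finset V) := mem_singleton_self v
  constructor
  · intro a ha
    constructor
    · -- a = v, apex v' = inr false
      intro heq
      subst heq
      constructor
      · rw [mem_susp hK]
        have h1 : eOf ({Sum.inr false} : Finset (V ⊕ Bool)) = {Sum.inr false} :=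
          eOf_of_subset (by intro x hx; simp at hx; simp [hx])
        have h2 : sOf ({Sum.inr false} : Finset (V ⊕ Bool)) = ∅ :=
          sOf_of_subset (by intro x hx; simp at hx; simp [hx])
        rw [h1, h2]
        exact ⟨by simp, by intro x hx; simp at hx; simp [hx],
          Or.inl ⟨full_ne_single_false, hK.1⟩⟩
      · intro F hF
        by_contra hnot
        have hFs : F ∈ susp a K := (mem_filter.1 hF).1
        have hins : insert (Sum.inr false) F ∈ susp a K := by
          rw [mem_susp hK] at hFs ⊢
          obtain ⟨hvs, he, hd⟩ := hFs
          rw [eOf_insert_inr, sOf_insert_inr]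
          refine ⟨hvs, insert_subset (by simp) he, Or.inr ?_⟩
          rcases hd with ⟨_, hs⟩ | hins
          · exact cone_insert hK.2 ha hs
          · exact hins
        have := (mem_filter.1 hF).2 _ hins (subset_insert _ _)
        exact hnot (this ▸ mem_insert_self _ _)
    · -- a ≠ v, apex inl a
      intro hav
      constructor
      · rw [mem_susp hK]
        have h1 : eOf ({Sum.inl a} : Finset (V ⊕ Bool)) = ∅ := by
          ext x; simp; rintro rfl; simp
        have h2 : sOf ({Sum.inl a} : Finset (V ⊕ Bool)) = {a} := by
          ext x; simp
        rw [h1, h2]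
        refine ⟨by simp [Ne.symm hav], by simp, Or.inl ⟨?_, ha.1⟩⟩
        intro h
        have : (Sum.inr false : V ⊕ Bool) ∈ (∅ : Finset (V ⊕ Bool)) := by
          rw [h]; simp
        simp at this
      · intro F hF
        by_contra hnot
        have hFs : F ∈ susp v K := (mem_filter.1 hF).1
        have hins : insert (Sum.inl a) F ∈ susp v K := by
          rw [mem_susp hK] at hFs ⊢
          obtain ⟨hvs, he, hd⟩ := hFs
          rw [eOf_insert_inl, sOf_insert_inl]
          refine ⟨by simp [Ne.symm hav, hvs], he, ?_⟩
          rcases hd with ⟨hne, hs⟩ | hins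
          · exact Or.inl ⟨hne, cone_insert hK.2 ha hs⟩
          · refine Or.inr ?_
            rw [Finset.insert_comm]
            exact cone_insert hK.2 ha hins
        have := (mem_filter.1 hF).2 _ hins (subset_insert _ _)
        exact hnot (this ▸ mem_insert_self _ _)
  · -- converse
    rintro ⟨b, hb⟩
    have hdc : ∀ s ∈ susp v K, ∀ t ⊆ s, t ∈ susp v K :=
      fun s hs t ht => susp_dc hK hs ht
    match b with
    | Sum.inl a =>
      refine ⟨a, ?_, ?_⟩
      · -- {a} ∈ K
        have h := (mem_susp hK).1 hb.1
        have h2 : sOf ({Sum.inl a} : Finset (V ⊕ Bool)) = {a} := by ext x; simp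
        rw [h2] at h
        rcases h.2.2 with ⟨_, hs⟩ | hins
        · exact hs
        · exact hK.2 _ hins _ (subset_insert _ _)
      · intro F hF
        have hav : a ≠ v := by
          have h := (mem_susp hK).1 hb.1
          have h2 : sOf ({Sum.inl a} : Finset (V ⊕ Bool)) = {a} := by ext x; simp
          rw [h2] at h
          intro hh
          exact h.1 (by simp [hh])
        have hFK : F ∈ K := (mem_filter.1 hF).1
        by_cases hvF : v ∈ F
        · -- G = {v',v''} ∪ inl (F.erase v)
          set G : Finset (V ⊕ Bool) :=
            {Sum.inr false, Sum.inr true} ∪ (F.erase v).image Sum.inl with hG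
          have heG : eOf G = {Sum.inr false, Sum.inr true} := by
            rw [hG, eOf_union, eOf_of_subset subset_rfl, eOf_image_inl, union_empty]
          have hsG : sOf G = F.erase v := by
            rw [hG, sOf_union, sOf_of_subset subset_rfl, sOf_image_inl, empty_union]
          have hGmem : G ∈ susp v K := by
            rw [mem_susp hK, heG, hsG]
            exact ⟨notMem_erase _ _, subset_rfl,
              Or.inr (by rwa [insert_erase hvF])⟩
          have hinsG : insert (Sum.inl a) G ∈ susp v K :=
            cone_insert hdc hb hGmem
          rw [mem_susp hK, eOf_insert_inl, sOf_insert_inl, heG, hsG] at hinsG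
          rcases hinsG.2.2 with ⟨hne, _⟩ | hins
          · exact absurd rfl hne
          · have : insert a F ∈ K := by
              rwa [Finset.insert_comm, insert_erase hvF] at hins
            have := (mem_filter.1 hF).2 _ this (subset_insert _ _)
            exact this ▸ mem_insert_self _ _
        · -- G = inl F
          set G : Finset (V ⊕ Bool) := F.image Sum.inl with hG
          have hGmem : G ∈ susp v K := by
            rw [mem_susp hK, hG, eOf_image_inl, sOf_image_inl]
            refine ⟨hvF, by simp, Or.inl ⟨?_, hFK⟩⟩
            intro h
            have : (Sum.inr false : V ⊕ Bool) ∈ (∅ : Finset (V ⊕ Bool)) := by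
              rw [h]; simp
            simp at this
          have hinsG : insert (Sum.inl a) G ∈ susp v K :=
            cone_insert hdc hb hGmem
          rw [mem_susp hK, eOf_insert_inl, sOf_insert_inl, hG, sOf_image_inl]
            at hinsG
          have haF : insert a F ∈ K := by
            rcases hinsG.2.2 with ⟨_, hs⟩ | hins
            · exact hs
            · exact hK.2 _ hins _ (subset_insert _ _)
          have := (mem_filter.1 hF).2 _ haF (subset_insert _ _)
          exact this ▸ mem_insert_self _ _
    | Sum.inr c =>
      refine ⟨v, hv, ?_⟩
      intro F hF
      by_contra hvF
      have hFK : F ∈ K := (mem_filter.1 hF).1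
      set G : Finset (V ⊕ Bool) := {Sum.inr (!c)} ∪ F.image Sum.inl with hG
      have hsubG : ({Sum.inr (!c)} : Finset (V ⊕ Bool)) ⊆
          {Sum.inr false, Sum.inr true} := by
        intro x hx; simp at hx; subst hx; cases c <;> simp
      have heG : eOf G = {Sum.inr (!c)} := by
        rw [hG, eOf_union, eOf_of_subset hsubG, eOf_image_inl, union_empty]
      have hsG : sOf G = F := by
        rw [hG, sOf_union, sOf_of_subset hsubG, sOf_image_inl, empty_union]
      have hGmem : G ∈ susp v K := by
        rw [mem_susp hK, heG, hsG]
        refine ⟨hvF, hsubG, Or.inl ⟨?_, hFK⟩⟩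
        intro h
        have : (Sum.inr c : V ⊕ Bool) ∈ ({Sum.inr (!c)} : Finset (V ⊕ Bool)) := by
          rw [h]; cases c <;> simp
        simp at this
      have hinsG : insert (Sum.inr c) G ∈ susp v K := cone_insert hdc hb hGmem
      rw [mem_susp hK, eOf_insert_inr, sOf_insert_inr, heG, hsG] at hinsG
      rcases hinsG.2.2 with ⟨hne, _⟩ | hins
      · refine hne ?_
        apply subset_antisymm hinsG.2.1
        intro x hx
        simp at hx
        rcases hx with rfl | rfl <;> cases c <;> simp
      · have := (mem_filter.1 hF).2 _ hins (subset_insert _ _)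
        exact hvF (this ▸ mem_insert_self _ _)
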